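/- arXiv:2209.03705 — 4 statements merged into one kernel-verified Lean document; each statement's English description precedes it below -/
import Mathlib

section
/- If Φ̄ ∈ C¹(ℝᴷ, ℝ) is strongly convex with parameter κ > 0 (i.e., ⟨x − y, ∇Φ̄(x) − ∇Φ̄(y)⟩ ≥ κ‖x − y‖² for all x, y) with minimiser θ*, then for λ = min(κ/α², 1/4) and all x: (x − θ*)·∇Φ̄(x)/2 ≥ λ(Φ̄(x) − Φ̄(θ*) + α²‖x − θ*‖²/4). -/
/-!
Strong monotonicity of `∇Φ` between `x` and `θ*` gives `⟪x - θ*, ∇Φ x⟫ ≥ κ ‖x - θ*‖²`, since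
`∇Φ θ* = 0`. Monotonicity of `∇Φ` also makes `Φ` convex, so by the mean value theorem on the
segment `[θ*, x]` the inner product dominates the gap `Φ x - Φ θ*`. With `λ ≤ 1/4` and
`λ α² ≤ κ`, a quarter of `⟪x - θ*, ∇Φ x⟫` pays for each of the two terms on the left.
-/

open RealInnerProductSpace

variable {E : Type*} [NormedAddCommGroup E] [InnerProductSpace ℝ E] [CompleteSpace E]

theorem IsLocalMin.gradient_eq_zero {f : E → ℝ} {a : E} (h : IsLocalMin f a) :
    gradient f a = 0 := by
  simp [gradient, h.fderiv_eq_zero]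

theorem Differentiable.hasDerivAt_comp_add_smul {f : E → ℝ} (hf : Differentiable ℝ f)
    (a v : E) (t : ℝ) :
    HasDerivAt (fun s : ℝ => f (a + s • v)) ⟪gradient f (a + t • v), v⟫ t := by
  have hline : HasDerivAt (fun s : ℝ => a + s • v) v t := by
    simpa using ((hasDerivAt_id t).smul_const v).const_add a
  rw [inner_gradient_left]
  exact (hf (a + t • v)).hasFDerivAt.comp_hasDerivAt t hline

theorem sub_le_inner_gradient_of_monotone_gradient {f : E → ℝ} (hf : Differentiable ℝ f)
    (hmono : ∀ x y : E, 0 ≤ ⟪x - y, gradient f x - gradient f y⟫) (x y : E) :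
    f x - f y ≤ ⟪x - y, gradient f x⟫ := by
  set v := x - y
  obtain ⟨c, hc, hslope⟩ := exists_hasDerivAt_eq_slope (fun s : ℝ => f (y + s • v)) _ one_pos
    (fun t _ => (hf.hasDerivAt_comp_add_smul y v t).continuousAt.continuousWithinAt)
    (fun t _ => hf.hasDerivAt_comp_add_smul y v t)
  set z := y + c • v
  have hmvt : ⟪gradient f z, v⟫ = f x - f y := by
    simpa [v] using hslope
  have hxz : x - z = (1 - c) • v := by
    simp only [z, v]; module
  have hmono_z : 0 ≤ (1 - c) * ⟪v, gradient f x - gradient f z⟫ := by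
    simpa only [hxz, real_inner_smul_left] using hmono x z
  have hvz : ⟪v, gradient f z⟫ ≤ ⟪v, gradient f x⟫ := by
    rw [inner_sub_right] at hmono_z
    nlinarith [hc.2]
  rw [← hmvt, real_inner_comm]
  exact hvz

theorem stmt1_general {K : ℕ} (Φ : EuclideanSpace ℝ (Fin K) → ℝ) (κ α : ℝ)
    (hκ : 0 < κ)
    (hC1 : ContDiff ℝ 1 Φ)
    (hsc : ∀ x y : EuclideanSpace ℝ (Fin K),
      κ * ‖x - y‖ ^ 2 ≤ ⟪x - y, gradient Φ x - gradient Φ y⟫)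
    (θs : EuclideanSpace ℝ (Fin K))
    (hmin : ∀ x, Φ θs ≤ Φ x) :
    ∀ x, min (κ / α ^ 2) (1 / 4) * (Φ x - Φ θs + α ^ 2 * ‖x - θs‖ ^ 2 / 4)
      ≤ ⟪x - θs, gradient Φ x⟫ / 2 := by
  intro x
  have hθs : gradient Φ θs = 0 := IsLocalMin.gradient_eq_zero (.of_forall hmin)
  have hcoercive : κ * ‖x - θs‖ ^ 2 ≤ ⟪x - θs, gradient Φ x⟫ := by
    simpa [hθs] using hsc x θs
  have hgap : Φ x - Φ θs ≤ ⟪x - θs, gradient Φ x⟫ :=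
    sub_le_inner_gradient_of_monotone_gradient (hC1.differentiable one_ne_zero)
      (fun x y => le_trans (by positivity) (hsc x y)) x θs
  set lam := min (κ / α ^ 2) (1 / 4)
  have hlam_nonneg : 0 ≤ lam := le_min (by positivity) (by norm_num)
  have hlam_le : lam ≤ 1 / 4 := min_le_right _ _
  have hlam_mul : lam * α ^ 2 ≤ κ := by
    refine (mul_le_mul_of_nonneg_right (min_le_left _ _) (sq_nonneg α)).trans ?_
    rcases eq_or_ne (α ^ 2) 0 with hα | hα
    · simp [hα, hκ.le]
    · rw [div_mul_cancel₀ _ hα]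
  have hinner_nonneg : 0 ≤ ⟪x - θs, gradient Φ x⟫ := le_trans (by positivity) hcoercive
  calc lam * (Φ x - Φ θs + α ^ 2 * ‖x - θs‖ ^ 2 / 4)
      = lam * (Φ x - Φ θs) + lam * α ^ 2 * ‖x - θs‖ ^ 2 / 4 := by ring
    _ ≤ 1 / 4 * ⟪x - θs, gradient Φ x⟫ + κ * ‖x - θs‖ ^ 2 / 4 := by
      refine add_le_add ?_ (by gcongr)
      exact (mul_le_mul_of_nonneg_left hgap hlam_nonneg).trans
        (mul_le_mul_of_nonneg_right hlam_le hinner_nonneg)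
    _ ≤ ⟪x - θs, gradient Φ x⟫ / 2 := by linarith

/-- A strongly convex `C¹` function satisfies the structural Lyapunov assumption with
`λ = min (κ/α²) (1/4)`. -/
theorem stmt1 {K : ℕ} (Φ : EuclideanSpace ℝ (Fin K) → ℝ) (κ α : ℝ)
    (hκ : 0 < κ) (hα : 0 < α)
    (hC1 : ContDiff ℝ 1 Φ)
    (hsc : ∀ x y : EuclideanSpace ℝ (Fin K),
      κ * ‖x - y‖ ^ 2 ≤ ⟪x - y, gradient Φ x - gradient Φ y⟫)
    (θs : EuclideanSpace ℝ (Fin K))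
    (hmin : ∀ x, Φ θs ≤ Φ x) :
    ∀ x, min (κ / α ^ 2) (1 / 4) * (Φ x - Φ θs + α ^ 2 * ‖x - θs‖ ^ 2 / 4)
      ≤ ⟪x - θs, gradient Φ x⟫ / 2 :=
  stmt1_general Φ κ α hκ hC1 hsc θs hmin
end

section
/- Suppose Φ̄ ∈ C¹(ℝᴷ) with global minimiser θ* satisfies (x − θ*)·∇Φ̄(x)/2 ≥ λ(Φ̄(x) − Φ̄(θ*) + α²‖x − θ*‖²/4) for some λ ∈ (0, 1/4] and α > 0. Let (q_t, p_t) solve q' = p, p' = −∇Φ̄(q) − α p. Define V(x, y) = Φ̄(x) − Φ̄(θ*) + (α²/4)(‖x − θ* + α⁻¹y‖² + ‖α⁻¹y‖² − λ‖x − θ*‖²). Then V(q_t, p_t) ≤ V(q₀, p₀) e^{−αλt} for all t ≥ 0. -/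
/-!
Along the flow, `q - θ* + α⁻¹ p` has derivative `-α⁻¹ ∇Φ̄(q)`: the damping cancels. Hence
`dV/dt = -(α/2)⟪q - θ*, ∇Φ̄(q)⟫ - (α/2)‖p‖² - (α²λ/2)⟪q - θ*, p⟫`, and after expanding the squares
in `V`, the difference `-αλ V - dV/dt` is `α` times the slack in the hypothesis on `∇Φ̄`, plus
`α³λ²‖q - θ*‖²/4 + α(1 - λ)‖p‖²/2 ≥ 0`. Grönwall's inequality then gives the exponential decay.
-/

open RealInnerProductSpace

open Real in
theorem le_mul_exp_of_hasDerivAt_le {f f' : ℝ → ℝ} {K : ℝ} (hf : ∀ t, HasDerivAt f (f' t) t)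
    (bound : ∀ t, f' t ≤ K * f t) {t : ℝ} (ht : 0 ≤ t) : f t ≤ f 0 * exp (K * t) := by
  have hcont : Continuous f := continuous_iff_continuousAt.2 fun s => (hf s).continuousAt
  simpa [gronwallBound_ε0] using le_gronwallBound_of_liminf_deriv_right_le (K := K) (ε := 0)
    hcont.continuousOn (fun s _ _ hr => (hf s).hasDerivWithinAt.liminf_right_slope_le hr) le_rfl
    (fun s _ => (add_zero (K * f s)).symm ▸ bound s) t ⟨ht, le_rfl⟩

section UnderdampedLyapunov

variable {E : Type*} [NormedAddCommGroup E] [InnerProductSpace ℝ E]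

noncomputable def underdampedLyapunov (Φ : E → ℝ) (α lam : ℝ) (θ x y : E) : ℝ :=
  Φ x - Φ θ + α ^ 2 / 4 * (‖x - θ + α⁻¹ • y‖ ^ 2 + ‖α⁻¹ • y‖ ^ 2 - lam * ‖x - θ‖ ^ 2)

theorem hasDerivAt_underdampedLyapunov [CompleteSpace E] {Φ : E → ℝ} {α : ℝ} (hα : α ≠ 0)
    (lam : ℝ) (θ : E) {q p : ℝ → E} {g : E} {t : ℝ} (hΦ : HasGradientAt Φ g (q t))
    (hq : HasDerivAt q (p t) t) (hp : HasDerivAt p (-g - α • p t) t) :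
    HasDerivAt (fun s => underdampedLyapunov Φ α lam θ (q s) (p s))
      (-(α / 2) * ⟪q t - θ, g⟫ - α / 2 * ‖p t‖ ^ 2 - α ^ 2 * lam / 2 * ⟪q t - θ, p t⟫) t := by
  have hΦq : HasDerivAt (fun s => Φ (q s)) ⟪g, p t⟫ t := hΦ.hasFDerivAt.comp_hasDerivAt t hq
  have hz : HasDerivAt (fun s => q s - θ + α⁻¹ • p s) (-α⁻¹ • g) t := by
    refine ((hq.sub_const θ).add (hp.const_smul α⁻¹)).congr_deriv ?_
    rw [smul_sub, smul_smul, inv_mul_cancel₀ hα, one_smul]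
    module
  have hw : HasDerivAt (fun s => α⁻¹ • p s) (α⁻¹ • (-g - α • p t)) t := hp.const_smul α⁻¹
  refine ((hΦq.sub_const (Φ θ)).add (((hz.norm_sq.add hw.norm_sq).sub
    ((hq.sub_const θ).norm_sq.const_mul lam)).const_mul (α ^ 2 / 4))).congr_deriv ?_
  simp only [inner_add_left, inner_sub_right, inner_neg_right, real_inner_smul_left,
    real_inner_smul_right, real_inner_self_eq_norm_sq, real_inner_comm g]
  field_simp
  ring

theorem underdampedLyapunov_rate_le {α lam f : ℝ} (hα : 0 < α) (hlam : lam ≤ 1) {Q P G : E}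
    (hG : lam * (f + α ^ 2 * ‖Q‖ ^ 2 / 4) ≤ ⟪Q, G⟫ / 2) :
    -(α / 2) * ⟪Q, G⟫ - α / 2 * ‖P‖ ^ 2 - α ^ 2 * lam / 2 * ⟪Q, P⟫
      ≤ -(α * lam) * (f + α ^ 2 / 4 * (‖Q + α⁻¹ • P‖ ^ 2 + ‖α⁻¹ • P‖ ^ 2 - lam * ‖Q‖ ^ 2)) := by
  have hsplit : -(α * lam) * (f + α ^ 2 / 4 * (‖Q + α⁻¹ • P‖ ^ 2 + ‖α⁻¹ • P‖ ^ 2 - lam * ‖Q‖ ^ 2))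
      - (-(α / 2) * ⟪Q, G⟫ - α / 2 * ‖P‖ ^ 2 - α ^ 2 * lam / 2 * ⟪Q, P⟫)
      = α * (⟪Q, G⟫ / 2 - lam * (f + α ^ 2 * ‖Q‖ ^ 2 / 4))
        + α ^ 3 * lam ^ 2 / 4 * ‖Q‖ ^ 2 + α / 2 * (1 - lam) * ‖P‖ ^ 2 := by
    rw [norm_add_sq_real, real_inner_smul_right, norm_smul, Real.norm_eq_abs, mul_pow, sq_abs]
    field_simp
    ring
  have h₁ : 0 ≤ α * (⟪Q, G⟫ / 2 - lam * (f + α ^ 2 * ‖Q‖ ^ 2 / 4)) :=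
    mul_nonneg hα.le (sub_nonneg.2 hG)
  have h₂ : 0 ≤ α / 2 * (1 - lam) * ‖P‖ ^ 2 := by
    have := sub_nonneg.2 hlam
    positivity
  have h₃ : 0 ≤ α ^ 3 * lam ^ 2 / 4 * ‖Q‖ ^ 2 := by positivity
  linarith

end UnderdampedLyapunov

theorem stmt3_general {K : ℕ} (Φ : EuclideanSpace ℝ (Fin K) → ℝ) (α lam : ℝ)
    (hα : 0 < α) (hlam : lam ∈ Set.Ioc (0 : ℝ) (1 / 4))
    (hC1 : ContDiff ℝ 1 Φ)
    (θs : EuclideanSpace ℝ (Fin K))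
    (hass : ∀ x, lam * (Φ x - Φ θs + α ^ 2 * ‖x - θs‖ ^ 2 / 4)
      ≤ ⟪x - θs, gradient Φ x⟫ / 2)
    (q p : ℝ → EuclideanSpace ℝ (Fin K))
    (hq : ∀ t, HasDerivAt q (p t) t)
    (hp : ∀ t, HasDerivAt p (-(gradient Φ (q t)) - α • p t) t)
    (V : EuclideanSpace ℝ (Fin K) → EuclideanSpace ℝ (Fin K) → ℝ)
    (hV : ∀ x y, V x y = Φ x - Φ θs
      + α ^ 2 / 4 * (‖x - θs + α⁻¹ • y‖ ^ 2 + ‖α⁻¹ • y‖ ^ 2 - lam * ‖x - θs‖ ^ 2)) :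
    ∀ t ≥ (0 : ℝ), V (q t) (p t) ≤ V (q 0) (p 0) * Real.exp (-(α * lam * t)) := by
  intro t ht
  have hgrad (x) : HasGradientAt Φ (gradient Φ x) x :=
    (hC1.differentiable one_ne_zero x).hasGradientAt
  have hV' : V = underdampedLyapunov Φ α lam θs := funext₂ hV
  rw [hV', ← neg_mul]
  exact le_mul_exp_of_hasDerivAt_le
    (fun s => hasDerivAt_underdampedLyapunov hα.ne' lam θs (hgrad _) (hq s) (hp s))
    (fun s => underdampedLyapunov_rate_le hα (hlam.2.trans (by norm_num)) (hass (q s))) ht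

/-- Exponential decay of the Lyapunov function `V` along the underdamped gradient flow. -/
theorem stmt3 {K : ℕ} (Φ : EuclideanSpace ℝ (Fin K) → ℝ) (α lam : ℝ)
    (hα : 0 < α) (hlam : lam ∈ Set.Ioc (0 : ℝ) (1 / 4))
    (hC1 : ContDiff ℝ 1 Φ)
    (θs : EuclideanSpace ℝ (Fin K)) (hmin : ∀ x, Φ θs ≤ Φ x)
    (hass : ∀ x, lam * (Φ x - Φ θs + α ^ 2 * ‖x - θs‖ ^ 2 / 4)
      ≤ ⟪x - θs, gradient Φ x⟫ / 2)
    (q p : ℝ → EuclideanSpace ℝ (Fin K))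
    (hq : ∀ t, HasDerivAt q (p t) t)
    (hp : ∀ t, HasDerivAt p (-(gradient Φ (q t)) - α • p t) t)
    (V : EuclideanSpace ℝ (Fin K) → EuclideanSpace ℝ (Fin K) → ℝ)
    (hV : ∀ x y, V x y = Φ x - Φ θs
      + α ^ 2 / 4 * (‖x - θs + α⁻¹ • y‖ ^ 2 + ‖α⁻¹ • y‖ ^ 2 - lam * ‖x - θs‖ ^ 2)) :
    ∀ t ≥ (0 : ℝ), V (q t) (p t) ≤ V (q 0) (p 0) * Real.exp (-(α * lam * t)) :=
  stmt3_general Φ α lam hα hlam hC1 θs hass q p hq hp V hV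
end

section
/- Let Φ ∈ C¹(ℝᴷ) be convex with L-Lipschitz gradient and minimiser θ*, satisfying the structural Lyapunov assumption with λ ∈ (0, 1/4]. Let (q_t, p_t) solve q' = p, m p' = −∇Φ(q) − p with 0 < m ≤ 1, and let θ_t solve θ' = −∇Φ(θ) with q₀, θ₀ given. Then ‖q_t − θ_t‖ ≤ ‖q₀ − θ₀‖ + C m (1 + t)(‖p₀‖ + ‖q₀ − θ₀‖ + ‖θ₀ − θ*‖), where C = 2 + 8L + 4L² . -/
open RealInnerProductSpace Set

variable {K : ℕ}

local notation "E" => EuclideanSpace ℝ (Fin K)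

/-- chain rule: derivative of Φ ∘ c. -/
lemma hasDerivAt_comp_grad {Φ : E → ℝ} (hC1 : ContDiff ℝ 1 Φ)
    {c : ℝ → E} {c' : E} {t : ℝ} (hc : HasDerivAt c c' t) :
    HasDerivAt (fun s => Φ (c s)) ⟪gradient Φ (c t), c'⟫ t := by
  have hd : DifferentiableAt ℝ Φ (c t) := (hC1.differentiable one_ne_zero).differentiableAt
  have hg := hd.hasGradientAt.hasFDerivAt
  have := hg.comp_hasDerivAt t hc
  convert this using 1
  · rfl
  · rfl
  · rfl
  · simp [InnerProductSpace.toDual_apply_apply]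

/-- gradient inequality for convex functions. -/
lemma grad_ineq {Φ : E → ℝ} (hC1 : ContDiff ℝ 1 Φ) (hconv : ConvexOn ℝ Set.univ Φ)
    (x y : E) : Φ x + ⟪gradient Φ x, y - x⟫ ≤ Φ y := by
  rcases eq_or_ne y x with rfl | hxy
  · simp
  · set g : ℝ → ℝ := fun s => Φ (x + s • (y - x)) with hgdef
    have hder : ∀ s : ℝ, HasDerivAt g ⟪gradient Φ (x + s • (y - x)), y - x⟫ s := by
      intro s
      have hc : HasDerivAt (fun s : ℝ => x + s • (y - x)) (y - x) s := by
        simpa using ((hasDerivAt_id s).smul_const (y - x)).const_add x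
      exact hasDerivAt_comp_grad hC1 hc
    have hgconv : ConvexOn ℝ Set.univ g := by
      have haff : ConvexOn ℝ Set.univ fun s : ℝ => Φ (x + s • (y - x)) := by
        let A : ℝ →ᵃ[ℝ] E :=
          { toFun := fun s => x + s • (y - x)
            linear := LinearMap.toSpanSingleton ℝ _ (y - x)
            map_vadd' := by
              intro a b
              simp [LinearMap.toSpanSingleton, add_smul]
              module }
        have := hconv.comp_affineMap A
        exact this
      exact haff
    have h01 : (0 : ℝ) < 1 := one_pos
    have hslope := hgconv.le_slope_of_hasDerivAt (mem_univ (0:ℝ)) (mem_univ (1:ℝ)) h01 (hder 0)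
    have h0 : g 0 = Φ x := by simp [hgdef]
    have h1 : g 1 = Φ y := by simp [hgdef]
    rw [slope_def_field] at hslope
    simp only [h0, h1, zero_smul, add_zero] at hslope
    have : ⟪gradient Φ x, y - x⟫ ≤ Φ y - Φ x := by
      simpa using hslope
    linarith

lemma grad_mono {Φ : E → ℝ} (hC1 : ContDiff ℝ 1 Φ) (hconv : ConvexOn ℝ Set.univ Φ)
    (x y : E) : 0 ≤ ⟪x - y, gradient Φ x - gradient Φ y⟫ := by
  have h1 := grad_ineq hC1 hconv x y
  have h2 := grad_ineq hC1 hconv y x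
  have : ⟪gradient Φ x, y - x⟫ + ⟪gradient Φ y, x - y⟫ ≤ 0 := by linarith
  have hxy : ⟪gradient Φ y, x - y⟫ - ⟪gradient Φ x, x - y⟫ ≤ 0 := by
    have : ⟪gradient Φ x, y - x⟫ = - ⟪gradient Φ x, x - y⟫ := by
      rw [← inner_neg_right, neg_sub]
    linarith [this ▸ ‹⟪gradient Φ x, y - x⟫ + ⟪gradient Φ y, x - y⟫ ≤ 0›]
  have : ⟪x - y, gradient Φ x - gradient Φ y⟫
      = ⟪gradient Φ x, x - y⟫ - ⟪gradient Φ y, x - y⟫ := by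
    rw [inner_sub_right, real_inner_comm (x - y), real_inner_comm (x - y)]
  linarith

lemma grad_min_zero {Φ : E → ℝ} (θs : E) (hmin : ∀ x, Φ θs ≤ Φ x) :
    gradient Φ θs = 0 := by
  have hloc : IsLocalMin Φ θs := by
    apply Filter.Eventually.of_forall
    intro x; exact hmin x
  have := hloc.fderiv_eq_zero
  simp [gradient, this]

/-- if derivative is pointwise `≤ 0`, function is antitone; specialized. -/
lemma le_of_deriv_nonpos {G G' : ℝ → ℝ} (hG : ∀ s, HasDerivAt G (G' s) s)
    (hG' : ∀ s, G' s ≤ 0) {a b : ℝ} (hab : a ≤ b) : G b ≤ G a := by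
  have hd : Differentiable ℝ G := fun s => (hG s).differentiableAt
  have : ∀ s, deriv G s ≤ 0 := fun s => (hG s).deriv ▸ hG' s
  exact antitone_of_deriv_nonpos hd this hab

/-- comparison with an integral bound on the derivative. -/
lemma le_add_integral_of_deriv_le {G G' g : ℝ → ℝ} (hG : ∀ s, HasDerivAt G (G' s) s)
    (hg : Continuous g) (hle : ∀ s, G' s ≤ g s) {t : ℝ} (ht : 0 ≤ t) :
    G t ≤ G 0 + ∫ s in (0:ℝ)..t, g s := by
  have hΨ : ∀ s, HasDerivAt (fun u => G u - ∫ r in (0:ℝ)..u, g r) (G' s - g s) s := by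
    intro s
    exact (hG s).sub ((hg.integral_hasStrictDerivAt 0 s).hasDerivAt)
  have := le_of_deriv_nonpos hΨ (fun s => by linarith [hle s]) ht
  simp only [intervalIntegral.integral_same, sub_zero] at this
  linarith

/-- norm of difference bounded by integral of a bound on the derivative. -/
lemma norm_sub_le_integral_bound {f f' : ℝ → E} {g : ℝ → ℝ}
    (hf : ∀ s, HasDerivAt f (f' s) s) (hf' : Continuous f') (hg : Continuous g)
    {t : ℝ} (ht : 0 ≤ t) (hb : ∀ s ∈ Icc (0:ℝ) t, ‖f' s‖ ≤ g s) :
    ‖f t - f 0‖ ≤ ∫ s in (0:ℝ)..t, g s := by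
  have hint : IntervalIntegrable f' MeasureTheory.volume 0 t :=
    hf'.intervalIntegrable 0 t
  have heq : ∫ s in (0:ℝ)..t, f' s = f t - f 0 :=
    intervalIntegral.integral_eq_sub_of_hasDerivAt (fun s _ => hf s) hint
  rw [← heq]
  calc ‖∫ s in (0:ℝ)..t, f' s‖ ≤ ∫ s in (0:ℝ)..t, ‖f' s‖ :=
        intervalIntegral.norm_integral_le_integral_norm ht
    _ ≤ ∫ s in (0:ℝ)..t, g s := by
        apply intervalIntegral.integral_mono_on ht
          (hf'.norm.intervalIntegrable 0 t) (hg.intervalIntegrable 0 t)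
        intro s hs; exact hb s hs


lemma pbound {Φ : E → ℝ} (hC1 : ContDiff ℝ 1 Φ) {L m : ℝ} (hm : 0 < m) (θs : E)
    (hgb : ∀ x, ‖gradient Φ x‖ ≤ L * ‖x - θs‖)
    (q p : ℝ → E) (hq : ∀ u, HasDerivAt q (p u) u)
    (hp : ∀ u, HasDerivAt p (m⁻¹ • (-(gradient Φ (q u)) - p u)) u)
    {Qb : ℝ} (hL : 0 ≤ L) (hQb0 : 0 ≤ Qb) (hQb : ∀ u, 0 ≤ u → ‖q u - θs‖ ≤ Qb)
    {s : ℝ} (hs : 0 ≤ s) : ‖p s‖ ≤ Real.exp (-(s / m)) * ‖p 0‖ + L * Qb := by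
  have hqc : Continuous q := by
    rw [continuous_iff_continuousAt]; exact fun u => (hq u).continuousAt
  have hgradc : Continuous (fun x : E => gradient Φ x) :=
    (InnerProductSpace.toDual ℝ (EuclideanSpace ℝ (Fin K))).symm.continuous.comp
      (hC1.continuous_fderiv one_ne_zero)
  -- the rescaled momentum
  set ζ : ℝ → E := fun u => Real.exp (u / m) • p u with hζdef
  have hζ : ∀ u, HasDerivAt ζ (-(Real.exp (u / m) * m⁻¹) • gradient Φ (q u)) u := by
    intro u
    have hexp : HasDerivAt (fun v : ℝ => Real.exp (v / m)) (Real.exp (u / m) * m⁻¹) u := by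
      have h1 : HasDerivAt (fun v : ℝ => v / m) m⁻¹ u := by
        simpa using (hasDerivAt_id u).div_const m
      simpa using h1.exp
    have := hexp.smul (hp u)
    convert this using 1
    · rfl
    · rfl
    · rfl
    · rfl
    have hmne : m ≠ 0 := ne_of_gt hm
    match_scalars <;> field_simp <;> ring
  have hζ'c : Continuous fun u => -(Real.exp (u / m) * m⁻¹) • gradient Φ (q u) := by
    apply Continuous.smul (f := fun u => -(Real.exp (u / m) * m⁻¹)) (g := fun u => gradient Φ (q u))
    · exact ((Real.continuous_exp.comp (continuous_id.div_const m)).mul continuous_const).neg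
    · exact hgradc.comp hqc
  have hbound : ∀ u ∈ Icc (0:ℝ) s,
      ‖-(Real.exp (u / m) * m⁻¹) • gradient Φ (q u)‖ ≤ (L * Qb * m⁻¹) * Real.exp (u / m) := by
    intro u hu
    rw [norm_smul]
    have h1 : ‖gradient Φ (q u)‖ ≤ L * Qb := by
      calc ‖gradient Φ (q u)‖ ≤ L * ‖q u - θs‖ := hgb (q u)
        _ ≤ L * Qb := by
            have := hQb u hu.1
            exact mul_le_mul_of_nonneg_left this hL
    have h2 : ‖-(Real.exp (u / m) * m⁻¹)‖ = Real.exp (u / m) * m⁻¹ := by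
      rw [norm_neg, Real.norm_eq_abs, abs_of_pos]
      positivity
    rw [h2]
    have h3 : (0:ℝ) ≤ Real.exp (u / m) * m⁻¹ := by positivity
    calc Real.exp (u / m) * m⁻¹ * ‖gradient Φ (q u)‖
        ≤ Real.exp (u / m) * m⁻¹ * (L * Qb) := mul_le_mul_of_nonneg_left h1 h3
      _ = (L * Qb * m⁻¹) * Real.exp (u / m) := by ring
  have hFTC : ‖ζ s - ζ 0‖ ≤ ∫ u in (0:ℝ)..s, (L * Qb * m⁻¹) * Real.exp (u / m) :=
    norm_sub_le_integral_bound hζ hζ'c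
      (by continuity) hs hbound
  have hintval : ∫ u in (0:ℝ)..s, (L * Qb * m⁻¹) * Real.exp (u / m)
      = L * Qb * (Real.exp (s / m) - 1) := by
    have hder : ∀ u ∈ uIcc (0:ℝ) s,
        HasDerivAt (fun v => L * Qb * Real.exp (v / m)) ((L * Qb * m⁻¹) * Real.exp (u / m)) u := by
      intro u _
      have h1 : HasDerivAt (fun v : ℝ => v / m) m⁻¹ u := by
        simpa using (hasDerivAt_id u).div_const m
      have := (h1.exp).const_mul (L * Qb)
      convert this using 1; rfl; rfl; ring
    have hint : IntervalIntegrable (fun u => (L * Qb * m⁻¹) * Real.exp (u / m))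
        MeasureTheory.volume 0 s := by
      apply Continuous.intervalIntegrable; continuity
    rw [intervalIntegral.integral_eq_sub_of_hasDerivAt hder hint]
    simp [Real.exp_zero]
    ring
  rw [hintval] at hFTC
  -- unpack
  have hζs : ‖ζ s‖ = Real.exp (s / m) * ‖p s‖ := by
    rw [hζdef]; simp [norm_smul, Real.norm_eq_abs, abs_of_pos (Real.exp_pos _)]
  have hζ0 : ‖ζ 0‖ = ‖p 0‖ := by
    rw [hζdef]; simp
  have htri : ‖ζ s‖ - ‖ζ 0‖ ≤ ‖ζ s - ζ 0‖ := norm_sub_norm_le _ _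
  have hkey : Real.exp (s / m) * ‖p s‖ ≤ ‖p 0‖ + L * Qb * Real.exp (s / m) := by
    rw [hζs, hζ0] at htri
    nlinarith [mul_nonneg (mul_nonneg hL hQb0) (Real.exp_pos (s/m)).le]
  have hepos : 0 < Real.exp (s / m) := Real.exp_pos _
  have := mul_le_mul_of_nonneg_left hkey (le_of_lt (inv_pos.2 hepos))
  rw [Real.exp_neg]
  calc ‖p s‖ = (Real.exp (s/m))⁻¹ * (Real.exp (s/m) * ‖p s‖) := by
        field_simp
    _ ≤ (Real.exp (s/m))⁻¹ * (‖p 0‖ + L * Qb * Real.exp (s/m)) := this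
    _ = (Real.exp (s/m))⁻¹ * ‖p 0‖ + L * Qb := by field_simp

set_option maxHeartbeats 1000000 in
lemma qbound {Φ : E → ℝ} (hC1 : ContDiff ℝ 1 Φ) (hconv : ConvexOn ℝ Set.univ Φ)
    {L m : ℝ} (hm : 0 < m) (hm1 : m ≤ 1) (θs : E) (hmin : ∀ x, Φ θs ≤ Φ x)
    (hinner : ∀ x, 0 ≤ ⟪x - θs, gradient Φ x⟫)
    (hgb : ∀ x, ‖gradient Φ x‖ ≤ L * ‖x - θs‖) (hL : 0 ≤ L)
    (q p : ℝ → E) (hq : ∀ u, HasDerivAt q (p u) u)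
    (hp : ∀ u, HasDerivAt p (m⁻¹ • (-(gradient Φ (q u)) - p u)) u)
    {s : ℝ} (hs : 0 ≤ s) :
    ‖q s - θs‖ ≤ (2 * L + 2) * ‖q 0 - θs‖ + 3 * ‖p 0‖ := by
  have hmne : m ≠ 0 := ne_of_gt hm
  set W : ℝ → ℝ := fun u => (((Φ (q u) - Φ θs) + (m/2) * ⟪p u, p u⟫)
      + (m/2) * ⟪q u - θs, p u⟫) + (1/4) * ⟪q u - θs, q u - θs⟫ with hWdef
  have hqs : ∀ u, HasDerivAt (fun v => q v - θs) (p u) u := fun u => (hq u).sub_const θs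
  have hWd : ∀ u, HasDerivAt W
      (-((1 - m/2) * ⟪p u, p u⟫) - (1/2) * ⟪q u - θs, gradient Φ (q u)⟫) u := by
    intro u
    have h1 := hasDerivAt_comp_grad hC1 (hq u)
    have h2 := HasDerivAt.inner ℝ (hp u) (hp u)
    have h3 := HasDerivAt.inner ℝ (hqs u) (hp u)
    have h4 := HasDerivAt.inner ℝ (hqs u) (hqs u)
    have hcomb := (((h1.sub_const (Φ θs)).add (h2.const_mul (m/2))).add
        (h3.const_mul (m/2))).add (h4.const_mul (1/4))
    convert hcomb using 1
    · rfl
    · rfl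
    · rfl
    have c1 : ⟪gradient Φ (q u), p u⟫ = ⟪p u, gradient Φ (q u)⟫ := real_inner_comm _ _
    have c2 : ⟪p u, q u - θs⟫ = ⟪q u - θs, p u⟫ := real_inner_comm _ _
    simp only [real_inner_smul_right, real_inner_smul_left, inner_sub_right, inner_sub_left,
      inner_neg_right, inner_neg_left, c1, c2]
    field_simp
    ring
  have hWmono : W s ≤ W 0 := by
    apply le_of_deriv_nonpos hWd _ hs
    intro u
    have hp2 : 0 ≤ ⟪p u, p u⟫ := real_inner_self_nonneg
    have hin := hinner (q u)
    nlinarith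
  -- lower bound for W s
  have hlow : ‖q s - θs‖^2 / 8 ≤ W s := by
    have h1 : Φ θs ≤ Φ (q s) := hmin _
    have h2 : ⟪p s, p s⟫ = ‖p s‖^2 := real_inner_self_eq_norm_sq _
    have h3 : ⟪q s - θs, q s - θs⟫ = ‖q s - θs‖^2 := real_inner_self_eq_norm_sq _
    have h4 : -(‖q s - θs‖ * ‖p s‖) ≤ ⟪q s - θs, p s⟫ := by
      have := abs_real_inner_le_norm (q s - θs) (p s)
      have := neg_abs_le ⟪q s - θs, p s⟫
      nlinarith [abs_real_inner_le_norm (q s - θs) (p s), neg_abs_le ⟪q s - θs, p s⟫]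
    rw [hWdef]
    simp only [h2, h3]
    nlinarith [sq_nonneg (‖p s‖ - ‖q s - θs‖/2), norm_nonneg (q s - θs), norm_nonneg (p s),
      sq_nonneg (‖q s - θs‖), mul_nonneg (sub_nonneg.2 hm1) (sq_nonneg (‖q s - θs‖)),
      mul_nonneg (sub_nonneg.2 hm1) (sq_nonneg (‖p s‖))]
  -- upper bound for W 0
  have hup : W 0 ≤ (L + 1/2) * ‖q 0 - θs‖^2 + (3/4) * ‖p 0‖^2 := by
    have h2 : ⟪p 0, p 0⟫ = ‖p 0‖^2 := real_inner_self_eq_norm_sq _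
    have h3 : ⟪q 0 - θs, q 0 - θs⟫ = ‖q 0 - θs‖^2 := real_inner_self_eq_norm_sq _
    have h4 : ⟪q 0 - θs, p 0⟫ ≤ ‖q 0 - θs‖ * ‖p 0‖ := real_inner_le_norm _ _
    have h5 : Φ (q 0) - Φ θs ≤ L * ‖q 0 - θs‖^2 := by
      have hgi := grad_ineq hC1 hconv (q 0) θs
      have h6 : ⟪gradient Φ (q 0), θs - q 0⟫ = - ⟪gradient Φ (q 0), q 0 - θs⟫ := by
        rw [← inner_neg_right, neg_sub]
      have h7 : ⟪gradient Φ (q 0), q 0 - θs⟫ ≤ ‖gradient Φ (q 0)‖ * ‖q 0 - θs‖ :=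
        real_inner_le_norm _ _
      have h8 := hgb (q 0)
      nlinarith [norm_nonneg (q 0 - θs), norm_nonneg (gradient Φ (q 0))]
    rw [hWdef]
    simp only [h2, h3]
    nlinarith [norm_nonneg (q 0 - θs), norm_nonneg (p 0), hm.le,
      mul_nonneg (norm_nonneg (q 0 - θs)) (norm_nonneg (p 0)),
      sq_nonneg (‖q 0 - θs‖ - ‖p 0‖)]
  have hfin : ‖q s - θs‖^2 ≤ ((2 * L + 2) * ‖q 0 - θs‖ + 3 * ‖p 0‖)^2 := by
    have h8 : ‖q s - θs‖^2 ≤ (8*L+4) * ‖q 0 - θs‖^2 + 6 * ‖p 0‖^2 := by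
      have h9 := hlow.trans (hWmono.trans hup); linarith [h9]
    nlinarith [h8, mul_nonneg (norm_nonneg (q 0 - θs)) (norm_nonneg (p 0)),
      mul_nonneg (mul_nonneg hL (norm_nonneg (q 0 - θs))) (norm_nonneg (p 0)),
      mul_nonneg (mul_nonneg hL hL) (sq_nonneg (‖q 0 - θs‖))]
  nlinarith [norm_nonneg (q s - θs), norm_nonneg (q 0 - θs), norm_nonneg (p 0),
    mul_nonneg hL (norm_nonneg (q 0 - θs))]

lemma thetabound {Φ : E → ℝ} (θs : E)
    (hinner : ∀ x, 0 ≤ ⟪x - θs, gradient Φ x⟫)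
    (θ : ℝ → E) (hθ : ∀ u, HasDerivAt θ (-(gradient Φ (θ u))) u)
    {s : ℝ} (hs : 0 ≤ s) : ‖θ s - θs‖ ≤ ‖θ 0 - θs‖ := by
  set N : ℝ → ℝ := fun u => ⟪θ u - θs, θ u - θs⟫ with hNdef
  have hθs : ∀ u, HasDerivAt (fun v => θ v - θs) (-(gradient Φ (θ u))) u :=
    fun u => (hθ u).sub_const θs
  have hNd : ∀ u, HasDerivAt N
      (⟪θ u - θs, -(gradient Φ (θ u))⟫ + ⟪-(gradient Φ (θ u)), θ u - θs⟫) u :=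
    fun u => HasDerivAt.inner ℝ (hθs u) (hθs u)
  have hNmono : N s ≤ N 0 := by
    apply le_of_deriv_nonpos hNd _ hs
    intro u
    have h1 := hinner (θ u)
    have c1 : ⟪-(gradient Φ (θ u)), θ u - θs⟫ = ⟪θ u - θs, -(gradient Φ (θ u))⟫ :=
      real_inner_comm _ _
    rw [c1, inner_neg_right]
    linarith
  have h2 : ⟪θ s - θs, θ s - θs⟫ = ‖θ s - θs‖^2 := real_inner_self_eq_norm_sq _
  have h3 : ⟪θ 0 - θs, θ 0 - θs⟫ = ‖θ 0 - θs‖^2 := real_inner_self_eq_norm_sq _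
  rw [hNdef] at hNmono
  simp only [h2, h3] at hNmono
  nlinarith [norm_nonneg (θ s - θs), norm_nonneg (θ 0 - θs)]

set_option maxHeartbeats 1000000 in
/-- energy dissipation : `∫₀ᵗ ‖p‖² ≤ V 0`. -/
lemma Jbound {Φ : E → ℝ} (hC1 : ContDiff ℝ 1 Φ) {m : ℝ} (hm : 0 < m)
    (θs : E) (hmin : ∀ x, Φ θs ≤ Φ x)
    (q p : ℝ → E) (hq : ∀ u, HasDerivAt q (p u) u)
    (hp : ∀ u, HasDerivAt p (m⁻¹ • (-(gradient Φ (q u)) - p u)) u)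
    {t : ℝ} (ht : 0 ≤ t) :
    ∫ s in (0:ℝ)..t, ⟪p s, p s⟫ ≤ Φ (q 0) - Φ θs + (m/2) * ⟪p 0, p 0⟫ := by
  have hmne : m ≠ 0 := ne_of_gt hm
  have hpc : Continuous p := by
    rw [continuous_iff_continuousAt]; exact fun u => (hp u).continuousAt
  set V : ℝ → ℝ := fun u => (Φ (q u) - Φ θs) + (m/2) * ⟪p u, p u⟫ with hVdef
  have hVd : ∀ u, HasDerivAt V (-⟪p u, p u⟫) u := by
    intro u
    have h1 := hasDerivAt_comp_grad hC1 (hq u)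
    have h2 := HasDerivAt.inner ℝ (hp u) (hp u)
    have hcomb := (h1.sub_const (Φ θs)).add (h2.const_mul (m/2))
    convert hcomb using 1
    · rfl
    · rfl
    · rfl
    have c1 : ⟪gradient Φ (q u), p u⟫ = ⟪p u, gradient Φ (q u)⟫ := real_inner_comm _ _
    simp only [real_inner_smul_right, real_inner_smul_left, inner_sub_right, inner_sub_left,
      inner_neg_right, inner_neg_left, c1]
    field_simp
    ring
  have hintg : IntervalIntegrable (fun u => -⟪p u, p u⟫) MeasureTheory.volume 0 t := by
    apply Continuous.intervalIntegrable
    exact (hpc.inner hpc).neg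
  have hFTC : ∫ u in (0:ℝ)..t, -⟪p u, p u⟫ = V t - V 0 :=
    intervalIntegral.integral_eq_sub_of_hasDerivAt (fun u _ => hVd u) hintg
  have hVt : 0 ≤ V t := by
    have h1 := hmin (q t)
    have h2 : (0:ℝ) ≤ ⟪p t, p t⟫ := real_inner_self_nonneg
    rw [hVdef]
    dsimp only
    nlinarith
  have hInt : ∫ u in (0:ℝ)..t, ⟪p u, p u⟫ = -(V t - V 0) := by
    rw [← hFTC, intervalIntegral.integral_neg, neg_neg]
  rw [hInt]
  have hV0 : V 0 = Φ (q 0) - Φ θs + (m/2) * ⟪p 0, p 0⟫ := rfl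
  rw [← hV0]
  linarith [hVt]

set_option maxHeartbeats 1000000 in
/-- the key comparison bound on `F = q - θ + m p`. -/
lemma Fbound {Φ : E → ℝ} (hC1 : ContDiff ℝ 1 Φ) (hconv : ConvexOn ℝ Set.univ Φ)
    {L m : ℝ} (hm : 0 < m) (θs : E) (hmin : ∀ x, Φ θs ≤ Φ x)
    (hLip : ∀ x y : E, ‖gradient Φ x - gradient Φ y‖ ≤ L * ‖x - y‖) (hL : 0 ≤ L)
    (q p θ : ℝ → E) (hq : ∀ u, HasDerivAt q (p u) u)
    (hp : ∀ u, HasDerivAt p (m⁻¹ • (-(gradient Φ (q u)) - p u)) u)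
    (hθ : ∀ u, HasDerivAt θ (-(gradient Φ (θ u))) u)
    {t : ℝ} (ht : 0 ≤ t) :
    ‖q t - θ t + m • p t‖ ≤ ‖q 0 - θ 0 + m • p 0‖
      + (3/2) * m * Real.sqrt (L * (Φ (q 0) - Φ θs + (m/2) * ⟪p 0, p 0⟫))
      + (3/2) * (m * L * ∫ s in (0:ℝ)..t, ‖p s‖) := by
  have hmne : m ≠ 0 := ne_of_gt hm
  have hpc : Continuous p := by
    rw [continuous_iff_continuousAt]; exact fun u => (hp u).continuousAt
  obtain ⟨F, hFdef⟩ : ∃ F : ℝ → E, F = fun u => q u - θ u + m • p u := ⟨_, rfl⟩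
  obtain ⟨V, hVdef⟩ : ∃ V : ℝ → ℝ,
      V = fun u => (Φ (q u) - Φ θs) + (m/2) * ⟪p u, p u⟫ := ⟨_, rfl⟩
  obtain ⟨S, hSdef⟩ : ∃ S : ℝ → ℝ,
      S = fun u => (1/2) * ⟪F u, F u⟫ + (L * m^2) * V u := ⟨_, rfl⟩
  obtain ⟨I, hIdef⟩ : ∃ I : ℝ, I = ∫ s in (0:ℝ)..t, ‖p s‖ := ⟨_, rfl⟩
  have hFeq : ∀ u, F u = q u - θ u + m • p u := fun u => by rw [hFdef]
  have hVeq : ∀ u, V u = (Φ (q u) - Φ θs) + (m/2) * ⟪p u, p u⟫ := fun u => by rw [hVdef]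
  have hSeq : ∀ u, S u = (1/2) * ⟪F u, F u⟫ + (L * m^2) * V u := fun u => by rw [hSdef]
  have hInn : 0 ≤ I := by
    rw [hIdef]
    apply intervalIntegral.integral_nonneg ht
    intro u _; exact norm_nonneg _
  have hF' : ∀ u, HasDerivAt F (gradient Φ (θ u) - gradient Φ (q u)) u := by
    intro u
    rw [hFdef]
    have h1 := ((hq u).sub (hθ u)).add ((hp u).const_smul m)
    convert h1 using 1
    · rfl
    · rfl
    · rfl
    · rfl
    match_scalars <;> field_simp <;> ring
  have hVd : ∀ u, HasDerivAt V (-⟪p u, p u⟫) u := by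
    intro u
    rw [hVdef]
    have h1 := hasDerivAt_comp_grad hC1 (hq u)
    have h2 := HasDerivAt.inner ℝ (hp u) (hp u)
    have hcomb := (h1.sub_const (Φ θs)).add (h2.const_mul (m/2))
    convert hcomb using 1
    · rfl
    · rfl
    · rfl
    have c1 : ⟪gradient Φ (q u), p u⟫ = ⟪p u, gradient Φ (q u)⟫ := real_inner_comm _ _
    simp only [real_inner_smul_right, real_inner_smul_left, inner_sub_right, inner_sub_left,
      inner_neg_right, inner_neg_left, c1]
    field_simp
    ring
  have hSd : ∀ u, HasDerivAt S
      (⟪F u, gradient Φ (θ u) - gradient Φ (q u)⟫ - (L * m^2) * ⟪p u, p u⟫) u := by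
    intro u
    rw [hSdef]
    have h1 := HasDerivAt.inner ℝ (hF' u) (hF' u)
    have hcomb := (h1.const_mul (1/2)).add ((hVd u).const_mul (L * m^2))
    convert hcomb using 1
    · rfl
    · rfl
    · rfl
    have c1 : ⟪gradient Φ (θ u) - gradient Φ (q u), F u⟫
        = ⟪F u, gradient Φ (θ u) - gradient Φ (q u)⟫ := real_inner_comm _ _
    rw [c1]; ring
  have hSD_le : ∀ u, ⟪F u, gradient Φ (θ u) - gradient Φ (q u)⟫ - (L * m^2) * ⟪p u, p u⟫
      ≤ m * L * ‖p u‖ * ‖F u‖ := by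
    intro u
    set X := gradient Φ (q u) - gradient Φ (θ u) with hX
    have hsplit : ⟪F u, gradient Φ (θ u) - gradient Φ (q u)⟫
        = -⟪q u - θ u, X⟫ - m * ⟪p u, X⟫ := by
      rw [hFeq u]
      rw [hX]
      rw [show gradient Φ (θ u) - gradient Φ (q u)
          = -(gradient Φ (q u) - gradient Φ (θ u)) by abel]
      rw [inner_neg_right, inner_add_left, real_inner_smul_left]
      ring
    have hmono : 0 ≤ ⟪q u - θ u, X⟫ := grad_mono hC1 hconv (q u) (θ u)
    have hCS : -⟪p u, X⟫ ≤ ‖p u‖ * ‖X‖ := by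
      have h1 := abs_real_inner_le_norm (p u) X
      have h2 := neg_abs_le ⟪p u, X⟫
      nlinarith
    have hXle : ‖X‖ ≤ L * ‖q u - θ u‖ := hLip _ _
    have hqθ : ‖q u - θ u‖ ≤ ‖F u‖ + m * ‖p u‖ := by
      have h5 : q u - θ u = F u - m • p u := by rw [hFeq u]; abel
      rw [h5]
      calc ‖F u - m • p u‖ ≤ ‖F u‖ + ‖m • p u‖ := norm_sub_le _ _
        _ = ‖F u‖ + m * ‖p u‖ := by rw [norm_smul, Real.norm_eq_abs, abs_of_pos hm]
    have hpp : ⟪p u, p u⟫ = ‖p u‖^2 := real_inner_self_eq_norm_sq _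
    have hpn : (0:ℝ) ≤ ‖p u‖ := norm_nonneg _
    have h3 : -( m * ⟪p u, X⟫) ≤ m * (‖p u‖ * (L * (‖F u‖ + m * ‖p u‖))) := by
      have h4 : -⟪p u, X⟫ ≤ ‖p u‖ * (L * (‖F u‖ + m * ‖p u‖)) := by
        calc -⟪p u, X⟫ ≤ ‖p u‖ * ‖X‖ := hCS
          _ ≤ ‖p u‖ * (L * ‖q u - θ u‖) := mul_le_mul_of_nonneg_left hXle hpn
          _ ≤ ‖p u‖ * (L * (‖F u‖ + m * ‖p u‖)) := by
              apply mul_le_mul_of_nonneg_left _ hpn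
              exact mul_le_mul_of_nonneg_left hqθ hL
      calc -(m * ⟪p u, X⟫) = m * (-⟪p u, X⟫) := by ring
        _ ≤ m * (‖p u‖ * (L * (‖F u‖ + m * ‖p u‖))) := mul_le_mul_of_nonneg_left h4 hm.le
    rw [hsplit, hpp]
    nlinarith [h3, hmono]
  have hVnn : ∀ u, (0:ℝ) ≤ V u := by
    intro u
    have h5 := hmin (q u)
    have h3 : (0:ℝ) ≤ ⟪p u, p u⟫ := real_inner_self_nonneg
    rw [hVeq u]; nlinarith
  have hSnn : ∀ u, 0 ≤ S u := by
    intro u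
    have h1 : (0:ℝ) ≤ ⟪F u, F u⟫ := real_inner_self_nonneg
    rw [hSeq u]
    nlinarith [mul_nonneg (mul_nonneg hL (sq_nonneg m)) (hVnn u)]
  have hV0nn : (0:ℝ) ≤ V 0 := hVnn 0
  -- the δ-regularised Gronwall argument
  have hMain : ∀ δ : ℝ, 0 < δ → ‖F t‖ ≤ ‖F 0‖ + (3/2) * m * Real.sqrt (L * V 0)
      + (3/2) * (m * L * I) + (3/2) * δ := by
    intro δ hδ
    obtain ⟨Gd, hGdef⟩ : ∃ G : ℝ → ℝ, G = fun u => Real.sqrt (S u + δ^2) := ⟨_, rfl⟩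
    have hGeq : ∀ u, Gd u = Real.sqrt (S u + δ^2) := fun u => by rw [hGdef]
    have hpos : ∀ u, 0 < S u + δ^2 := fun u => by nlinarith [hSnn u]
    have hGdd : ∀ u, HasDerivAt Gd
        ((⟪F u, gradient Φ (θ u) - gradient Φ (q u)⟫ - (L * m^2) * ⟪p u, p u⟫)
          / (2 * Real.sqrt (S u + δ^2))) u := by
      intro u
      rw [hGdef]
      exact ((hSd u).add_const (δ^2)).sqrt (ne_of_gt (hpos u))
    have hFle : ∀ u, ‖F u‖ ≤ 2 * Real.sqrt (S u + δ^2) := by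
      intro u
      have h1 : ‖F u‖^2 ≤ 2 * (S u + δ^2) := by
        have h2 : ⟪F u, F u⟫ = ‖F u‖^2 := real_inner_self_eq_norm_sq _
        have h4 : (0:ℝ) ≤ (L * m^2) * V u :=
          mul_nonneg (mul_nonneg hL (sq_nonneg m)) (hVnn u)
        have h6 := hSeq u
        nlinarith [sq_nonneg δ]
      have h5 := Real.sq_sqrt (hpos u).le
      nlinarith [Real.sqrt_nonneg (S u + δ^2), norm_nonneg (F u)]
    have hGdle : ∀ u, (⟪F u, gradient Φ (θ u) - gradient Φ (q u)⟫
        - (L * m^2) * ⟪p u, p u⟫) / (2 * Real.sqrt (S u + δ^2)) ≤ m * L * ‖p u‖ := by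
      intro u
      have hrt : 0 < Real.sqrt (S u + δ^2) := Real.sqrt_pos.2 (hpos u)
      rw [div_le_iff₀ (by positivity)]
      calc ⟪F u, gradient Φ (θ u) - gradient Φ (q u)⟫ - (L * m^2) * ⟪p u, p u⟫
          ≤ m * L * ‖p u‖ * ‖F u‖ := hSD_le u
        _ ≤ m * L * ‖p u‖ * (2 * Real.sqrt (S u + δ^2)) := by
            apply mul_le_mul_of_nonneg_left (hFle u)
            positivity
    have hgcont : Continuous fun u => m * L * ‖p u‖ := continuous_const.mul hpc.norm
    have happ : Gd t ≤ Gd 0 + ∫ s in (0:ℝ)..t, m * L * ‖p s‖ :=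
      le_add_integral_of_deriv_le hGdd hgcont hGdle ht
    have hIeq : ∫ s in (0:ℝ)..t, m * L * ‖p s‖ = m * L * I := by
      rw [hIdef]
      exact intervalIntegral.integral_const_mul _ _
    rw [hIeq] at happ
    have hFt2 : ‖F t‖ ≤ Real.sqrt 2 * Gd t := by
      have h1 : ‖F t‖^2 ≤ 2 * (S t + δ^2) := by
        have h2 : ⟪F t, F t⟫ = ‖F t‖^2 := real_inner_self_eq_norm_sq _
        have h4 : (0:ℝ) ≤ (L * m^2) * V t :=
          mul_nonneg (mul_nonneg hL (sq_nonneg m)) (hVnn t)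
        have h6 := hSeq t
        nlinarith [sq_nonneg δ]
      rw [hGeq t]
      calc ‖F t‖ = Real.sqrt (‖F t‖^2) := (Real.sqrt_sq (norm_nonneg _)).symm
        _ ≤ Real.sqrt (2 * (S t + δ^2)) := Real.sqrt_le_sqrt h1
        _ = Real.sqrt 2 * Real.sqrt (S t + δ^2) := Real.sqrt_mul (by norm_num) _
    have hs2 : Real.sqrt 2 ≤ 3/2 := by
      rw [show (3:ℝ)/2 = Real.sqrt ((3/2)^2) by rw [Real.sqrt_sq]; norm_num]
      apply Real.sqrt_le_sqrt; norm_num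
    have hs2nn : (0:ℝ) ≤ Real.sqrt 2 := Real.sqrt_nonneg 2
    have hGd0 : Real.sqrt 2 * Gd 0 ≤ ‖F 0‖ + (3/2) * m * Real.sqrt (L * V 0) + (3/2) * δ := by
      have h1 : Real.sqrt 2 * Gd 0 = Real.sqrt (2 * (S 0 + δ^2)) := by
        rw [hGeq 0, ← Real.sqrt_mul (by norm_num)]
      have hLV0 : (0:ℝ) ≤ L * V 0 := mul_nonneg hL hV0nn
      have h2 : 2 * (S 0 + δ^2)
          ≤ (‖F 0‖ + (3/2) * m * Real.sqrt (L * V 0) + (3/2) * δ)^2 := by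
        have h3 : ⟪F 0, F 0⟫ = ‖F 0‖^2 := real_inner_self_eq_norm_sq _
        have h4 : (Real.sqrt (L * V 0))^2 = L * V 0 := Real.sq_sqrt hLV0
        have h4' : m^2 * (Real.sqrt (L * V 0))^2 = m^2 * (L * V 0) := by rw [h4]
        have h6 := hSeq 0
        rw [h6, h3]
        nlinarith [h4', hδ.le, hm.le,
          mul_nonneg (mul_nonneg hm.le (Real.sqrt_nonneg (L * V 0))) hδ.le,
          mul_nonneg (norm_nonneg (F 0)) hδ.le,
          mul_nonneg (mul_nonneg hm.le (Real.sqrt_nonneg (L * V 0))) (norm_nonneg (F 0))]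
      rw [h1]
      calc Real.sqrt (2 * (S 0 + δ^2))
          ≤ Real.sqrt ((‖F 0‖ + (3/2) * m * Real.sqrt (L * V 0) + (3/2) * δ)^2) :=
            Real.sqrt_le_sqrt h2
        _ = ‖F 0‖ + (3/2) * m * Real.sqrt (L * V 0) + (3/2) * δ := by
            apply Real.sqrt_sq
            positivity
    have hstep : Real.sqrt 2 * Gd t ≤ Real.sqrt 2 * (Gd 0 + m * L * I) :=
      mul_le_mul_of_nonneg_left happ hs2nn
    have h6 : (0:ℝ) ≤ m * L * I := by positivity
    have h7 : Real.sqrt 2 * (m * L * I) ≤ (3/2) * (m * L * I) :=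
      mul_le_mul_of_nonneg_right hs2 h6
    nlinarith [hFt2, hstep, hGd0, h7]
  -- remove δ
  have hMain2 := hMain
  simp only [hFdef, hVdef, hIdef] at hMain2
  by_contra hcon
  push_neg at hcon
  have hδpos : 0 < (‖q t - θ t + m • p t‖ - (‖q 0 - θ 0 + m • p 0‖
      + (3/2) * m * Real.sqrt (L * (Φ (q 0) - Φ θs + (m/2) * ⟪p 0, p 0⟫))
      + (3/2) * (m * L * ∫ s in (0:ℝ)..t, ‖p s‖)))/3 := by linarith
  have := hMain2 _ hδpos
  linarith

set_option maxHeartbeats 1000000 in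
lemma Ibound {Φ : E → ℝ} (hC1 : ContDiff ℝ 1 Φ) {L m : ℝ} (hm : 0 < m) (hm1 : m ≤ 1)
    (θs : E) (hmin : ∀ x, Φ θs ≤ Φ x) (hL : 0 ≤ L)
    (hΦ0 : Φ (q' 0) - Φ θs ≤ L * ‖q' 0 - θs‖^2)
    (hq : ∀ u, HasDerivAt q' (p' u) u)
    (hp : ∀ u, HasDerivAt p' (m⁻¹ • (-(gradient Φ (q' u)) - p' u)) u)
    (hpb : ∀ s, s ∈ Icc (0:ℝ) t' → ‖p' s‖ ≤ Real.exp (-(s/m)) * ‖p' 0‖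
      + L * ((2*L+2) * ‖q' 0 - θs‖ + 3 * ‖p' 0‖))
    (ht : 0 ≤ t') :
    (∫ s in (0:ℝ)..t', ‖p' s‖)
      ≤ (‖q' 0 - θs‖ + ‖p' 0‖) * (2*L + 1 + 2*t') / 4 := by
  have hpc : Continuous p' := by
    rw [continuous_iff_continuousAt]; exact fun u => (hp u).continuousAt
  obtain ⟨A, hA⟩ : ∃ x, x = ‖q' 0 - θs‖ := ⟨_, rfl⟩
  obtain ⟨B, hB⟩ : ∃ x, x = ‖p' 0‖ := ⟨_, rfl⟩
  have hA0 : 0 ≤ A := hA ▸ norm_nonneg _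
  have hB0 : 0 ≤ B := hB ▸ norm_nonneg _
  rw [← hA, ← hB]
  rcases eq_or_lt_of_le (by positivity : (0:ℝ) ≤ A + B) with hz | hpos
  · -- degenerate case : everything is zero
    have hAz : A = 0 := by linarith
    have hBz : B = 0 := by linarith
    have hint : (∫ s in (0:ℝ)..t', ‖p' s‖) ≤ 0 := by
      have h1 : (∫ s in (0:ℝ)..t', ‖p' s‖) ≤ ∫ s in (0:ℝ)..t', (0:ℝ) := by
        apply intervalIntegral.integral_mono_on ht (hpc.norm.intervalIntegrable 0 t')
          (continuous_const.intervalIntegrable 0 t')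
        intro s hs
        have := hpb s hs
        rw [← hA, ← hB, hAz, hBz] at this
        simpa using this
      simpa using h1
    nlinarith
  · -- main case
    have hptw : ∀ s, ‖p' s‖ ≤ (1/(2*(A+B))) * ⟪p' s, p' s⟫ + (A+B)/2 := by
      intro s
      have h1 : ⟪p' s, p' s⟫ = ‖p' s‖^2 := real_inner_self_eq_norm_sq _
      have hc : (0:ℝ) < 2*(A+B) := by positivity
      have key : ‖p' s‖ * (2*(A+B)) ≤ ‖p' s‖^2 + (A+B)^2 := by
        nlinarith [sq_nonneg (‖p' s‖ - (A+B))]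
      rw [h1]
      calc ‖p' s‖ = (‖p' s‖ * (2*(A+B)))/(2*(A+B)) := by field_simp
        _ ≤ (‖p' s‖^2 + (A+B)^2)/(2*(A+B)) := by gcongr
        _ = 1/(2*(A+B)) * ‖p' s‖^2 + (A+B)/2 := by field_simp
    have hint1 : (∫ s in (0:ℝ)..t', ‖p' s‖)
        ≤ ∫ s in (0:ℝ)..t', ((1/(2*(A+B))) * ⟪p' s, p' s⟫ + (A+B)/2) := by
      apply intervalIntegral.integral_mono_on ht (hpc.norm.intervalIntegrable 0 t')
      · apply Continuous.intervalIntegrable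
        exact (continuous_const.mul (hpc.inner hpc)).add continuous_const
      · intro s _; exact hptw s
    have hint2 : (∫ s in (0:ℝ)..t', ((1/(2*(A+B))) * ⟪p' s, p' s⟫ + (A+B)/2))
        = (1/(2*(A+B))) * (∫ s in (0:ℝ)..t', ⟪p' s, p' s⟫) + t' * ((A+B)/2) := by
      rw [intervalIntegral.integral_add]
      · rw [intervalIntegral.integral_const_mul, intervalIntegral.integral_const]
        simp only [smul_eq_mul, sub_zero]
      · apply Continuous.intervalIntegrable
        exact continuous_const.mul (hpc.inner hpc)
      · exact continuous_const.intervalIntegrable 0 t'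
    have hJ := Jbound hC1 hm θs hmin q' p' hq hp ht
    have hpp0 : ⟪p' 0, p' 0⟫ = ‖p' 0‖^2 := real_inner_self_eq_norm_sq _
    have hJ2 : (∫ s in (0:ℝ)..t', ⟪p' s, p' s⟫) ≤ (L + 1/2) * (A+B)^2 := by
      rw [hpp0, ← hB] at hJ
      rw [← hA] at hΦ0
      nlinarith [mul_nonneg hA0 hB0, mul_nonneg hL (mul_nonneg hA0 hB0),
        mul_nonneg hL (sq_nonneg B), sq_nonneg B]
    have hJnn : (0:ℝ) ≤ ∫ s in (0:ℝ)..t', ⟪p' s, p' s⟫ := by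
      apply intervalIntegral.integral_nonneg ht
      intro s _; exact real_inner_self_nonneg
    calc (∫ s in (0:ℝ)..t', ‖p' s‖)
        ≤ (1/(2*(A+B))) * (∫ s in (0:ℝ)..t', ⟪p' s, p' s⟫) + t' * ((A+B)/2) := by
          rw [← hint2]; exact hint1
      _ ≤ (1/(2*(A+B))) * ((L + 1/2) * (A+B)^2) + t' * ((A+B)/2) := by
          have := mul_le_mul_of_nonneg_left hJ2 (by positivity : (0:ℝ) ≤ 1/(2*(A+B)))
          linarith
      _ = (A + B) * (2*L + 1 + 2*t') / 4 := by
          field_simp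
          ring

lemma arith_main {L m t A B D T : ℝ} (hL : 0 ≤ L) (hm : 0 < m) (hm1 : m ≤ 1) (ht : 0 ≤ t)
    (hA0 : 0 ≤ A) (hB0 : 0 ≤ B) (hD0 : 0 ≤ D) (hT0 : 0 ≤ T) (hAD : A ≤ D + T) :
    (D + m*B) + (3/2)*m*(L*A + (2*L + m/8)*B) + (3/2)*(m*L*((A+B)*(2*L+1+2*t)/4))
      + m*((4/5)*B + L*((2*L+2)*A + 3*B))
    ≤ D + (2+8*L+4*L^2)*m*(1+t)*(B+D+T) := by
  obtain ⟨cA, hcA⟩ : ∃ x, x = (31/8)*L + (11/4)*L^2 + (3/4)*(L*t) := ⟨_, rfl⟩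
  obtain ⟨cB, hcB⟩ : ∃ x, x = 9/5 + (3/16)*m + (51/8)*L + (3/4)*L^2 + (3/4)*(L*t) := ⟨_, rfl⟩
  have hLt : 0 ≤ L * t := mul_nonneg hL ht
  have hLL : 0 ≤ L * L := mul_nonneg hL hL
  have hcA0 : 0 ≤ cA := by rw [hcA]; nlinarith
  have hEq : (D + m*B) + (3/2)*m*(L*A + (2*L + m/8)*B) + (3/2)*(m*L*((A+B)*(2*L+1+2*t)/4))
      + m*((4/5)*B + L*((2*L+2)*A + 3*B)) = D + m*(B*cB + A*cA) := by
    rw [hcA, hcB]; ring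
  have hBco : cB ≤ (2+8*L+4*L^2)*(1+t) := by
    rw [hcB]
    nlinarith [mul_nonneg hLL ht]
  have hDco : cA ≤ (2+8*L+4*L^2)*(1+t) := by
    rw [hcA]
    nlinarith [mul_nonneg hLL ht]
  have h1 : A*cA ≤ (D+T)*cA := mul_le_mul_of_nonneg_right hAD hcA0
  have h2 : B*cB ≤ B*((2+8*L+4*L^2)*(1+t)) := mul_le_mul_of_nonneg_left hBco hB0
  have h3 : (D+T)*cA ≤ (D+T)*((2+8*L+4*L^2)*(1+t)) :=
    mul_le_mul_of_nonneg_left hDco (by linarith)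
  have h4 : B*cB + A*cA ≤ (B+D+T)*((2+8*L+4*L^2)*(1+t)) := by linarith
  have h5 : m*(B*cB + A*cA) ≤ m*((B+D+T)*((2+8*L+4*L^2)*(1+t))) :=
    mul_le_mul_of_nonneg_left h4 hm.le
  have h6 : m*((B+D+T)*((2+8*L+4*L^2)*(1+t))) = (2+8*L+4*L^2)*m*(1+t)*(B+D+T) := by ring
  linarith [hEq.le, hEq.ge]

lemma arith_small {L m t A B D T : ℝ} (hL : 0 ≤ L) (hm : 0 < m) (hm1 : m ≤ 1) (ht : 0 ≤ t)
    (htm : t ≤ m/4)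
    (hA0 : 0 ≤ A) (hB0 : 0 ≤ B) (hD0 : 0 ≤ D) (hT0 : 0 ≤ T) (hAD : A ≤ D + T) :
    D + t*((B + L*((2*L+2)*A + 3*B)) + L*T)
    ≤ D + (2+8*L+4*L^2)*m*(1+t)*(B+D+T) := by
  obtain ⟨St, hSt⟩ : ∃ x, x = (B + L*((2*L+2)*A + 3*B)) + L*T := ⟨_, rfl⟩
  have hLt : 0 ≤ L * t := mul_nonneg hL ht
  have hLL : 0 ≤ L * L := mul_nonneg hL hL
  have hSt0 : 0 ≤ St := by
    rw [hSt]
    nlinarith [mul_nonneg hL hA0, mul_nonneg hL hB0, mul_nonneg hL hT0,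
      mul_nonneg hLL hA0]
  have h1 : t*St ≤ (m/4)*St := mul_le_mul_of_nonneg_right htm hSt0
  have h2 : St ≤ 4*((2+8*L+4*L^2)*(B+D+T)) := by
    rw [hSt]
    nlinarith [mul_nonneg hL hA0, mul_nonneg hL hB0, mul_nonneg hL hT0,
      mul_nonneg hLL hA0, mul_nonneg hLL hB0, mul_nonneg hLL hT0,
      mul_le_mul_of_nonneg_left hAD hL,
      mul_le_mul_of_nonneg_left hAD hLL]
  have h3 : (m/4)*St ≤ (m/4)*(4*((2+8*L+4*L^2)*(B+D+T))) :=
    mul_le_mul_of_nonneg_left h2 (by positivity)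
  have h4 : (m/4)*(4*((2+8*L+4*L^2)*(B+D+T))) = (2+8*L+4*L^2)*m*1*(B+D+T) := by ring
  have h5 : (2+8*L+4*L^2)*m*1*(B+D+T) ≤ (2+8*L+4*L^2)*m*(1+t)*(B+D+T) := by
    have hnn : 0 ≤ (2+8*L+4*L^2)*m := by positivity
    nlinarith [mul_nonneg (mul_nonneg hnn ht) (by linarith : (0:ℝ) ≤ B+D+T)]
  have h0 : t*((B + L*((2*L+2)*A + 3*B)) + L*T) = t*St := by rw [hSt]
  linarith

set_option maxHeartbeats 1600000 in
/-- The fixed-sample underdamped flow with small mass stays close to the gradient flow. -/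
theorem stmt10 {K : ℕ} (Φ : EuclideanSpace ℝ (Fin K) → ℝ) (L lam m : ℝ)
    (hC1 : ContDiff ℝ 1 Φ)
    (hconv : ConvexOn ℝ Set.univ Φ)
    (hLip : ∀ x y : EuclideanSpace ℝ (Fin K),
      ‖gradient Φ x - gradient Φ y‖ ≤ L * ‖x - y‖)
    (hlam : lam ∈ Set.Ioc (0 : ℝ) (1 / 4))
    (θs : EuclideanSpace ℝ (Fin K)) (hmin : ∀ x, Φ θs ≤ Φ x)
    (hass : ∀ x, lam * (Φ x - Φ θs + ‖x - θs‖ ^ 2 / 4)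
      ≤ ⟪x - θs, gradient Φ x⟫ / 2)
    (hm : 0 < m) (hm1 : m ≤ 1)
    (q p θ : ℝ → EuclideanSpace ℝ (Fin K))
    (hq : ∀ t, HasDerivAt q (p t) t)
    (hp : ∀ t, HasDerivAt p (m⁻¹ • (-(gradient Φ (q t)) - p t)) t)
    (hθ : ∀ t, HasDerivAt θ (-(gradient Φ (θ t))) t) :
    ∀ t ≥ (0 : ℝ), ‖q t - θ t‖ ≤ ‖q 0 - θ 0‖
      + (2 + 8 * L + 4 * L ^ 2) * m * (1 + t)
        * (‖p 0‖ + ‖q 0 - θ 0‖ + ‖θ 0 - θs‖) := by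
  intro t ht
  rcases Nat.eq_zero_or_pos K with hK0 | hKpos
  · -- trivial case of dimension 0
    subst hK0
    haveI : Subsingleton (EuclideanSpace ℝ (Fin 0)) :=
      ⟨fun a b => by ext i; exact i.elim0⟩
    have h1 : q t - θ t = 0 := Subsingleton.elim _ _
    have h2 : q 0 - θ 0 = 0 := Subsingleton.elim _ _
    have h3 : p 0 = 0 := Subsingleton.elim _ _
    have h4 : θ 0 - θs = 0 := Subsingleton.elim _ _
    rw [h1, h2, h3, h4]
    simp
  · -- positive dimension
    have hL : 0 ≤ L := by
      have h1 := hLip θs (θs + EuclideanSpace.single (⟨0, hKpos⟩ : Fin K) (1:ℝ))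
      have h2 : ‖θs - (θs + EuclideanSpace.single (⟨0, hKpos⟩ : Fin K) (1:ℝ))‖ = 1 := by
        rw [show θs - (θs + EuclideanSpace.single (⟨0, hKpos⟩ : Fin K) (1:ℝ))
            = -(EuclideanSpace.single (⟨0, hKpos⟩ : Fin K) (1:ℝ)) by abel]
        rw [norm_neg, EuclideanSpace.norm_single]
        norm_num
      rw [h2, mul_one] at h1
      exact le_trans (norm_nonneg _) h1
    have hgθs : gradient Φ θs = 0 := grad_min_zero θs hmin
    have hgb : ∀ x, ‖gradient Φ x‖ ≤ L * ‖x - θs‖ := by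
      intro x; have := hLip x θs; rwa [hgθs, sub_zero] at this
    have hinner : ∀ x, 0 ≤ ⟪x - θs, gradient Φ x⟫ := by
      intro x
      have h1 := hass x
      have h2 := hmin x
      have h3 : 0 ≤ lam * (Φ x - Φ θs + ‖x - θs‖^2/4) := by
        apply mul_nonneg hlam.1.le
        nlinarith [sq_nonneg (‖x - θs‖)]
      linarith
    -- abbreviations
    obtain ⟨A, hA⟩ : ∃ x, x = ‖q 0 - θs‖ := ⟨_, rfl⟩
    obtain ⟨B, hB⟩ : ∃ x, x = ‖p 0‖ := ⟨_, rfl⟩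
    obtain ⟨D, hD⟩ : ∃ x, x = ‖q 0 - θ 0‖ := ⟨_, rfl⟩
    obtain ⟨T, hT⟩ : ∃ x, x = ‖θ 0 - θs‖ := ⟨_, rfl⟩
    have hA0 : 0 ≤ A := hA ▸ norm_nonneg _
    have hB0 : 0 ≤ B := hB ▸ norm_nonneg _
    have hD0 : 0 ≤ D := hD ▸ norm_nonneg _
    have hT0 : 0 ≤ T := hT ▸ norm_nonneg _
    have hAD : A ≤ D + T := by
      rw [hA, hD, hT]
      calc ‖q 0 - θs‖ = ‖(q 0 - θ 0) + (θ 0 - θs)‖ := by rw [show q 0 - θs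
            = (q 0 - θ 0) + (θ 0 - θs) by abel]
        _ ≤ ‖q 0 - θ 0‖ + ‖θ 0 - θs‖ := norm_add_le _ _
    rw [← hB, ← hD, ← hT]
    -- position bound
    have hQb : ∀ s, 0 ≤ s → ‖q s - θs‖ ≤ (2*L+2)*A + 3*B := by
      intro s hs
      have := qbound hC1 hconv hm hm1 θs hmin hinner hgb hL q p hq hp hs
      rw [← hA, ← hB] at this
      exact this
    have hQb0 : 0 ≤ (2*L+2)*A + 3*B := by positivity
    -- momentum bound
    have hpb : ∀ s, 0 ≤ s → ‖p s‖ ≤ Real.exp (-(s/m)) * B + L * ((2*L+2)*A + 3*B) := by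
      intro s hs
      have := pbound hC1 hm θs hgb q p hq hp hL hQb0
        (fun u hu => hQb u hu) hs
      rw [← hB] at this
      exact this
    -- θ contraction
    have hθb : ∀ s, 0 ≤ s → ‖θ s - θs‖ ≤ T := by
      intro s hs
      have := thetabound θs hinner θ hθ hs
      rw [← hT] at this
      exact this
    -- value gap at the start
    have hΦ0 : Φ (q 0) - Φ θs ≤ L * ‖q 0 - θs‖^2 := by
      have hgi := grad_ineq hC1 hconv (q 0) θs
      have h6 : ⟪gradient Φ (q 0), θs - q 0⟫ = - ⟪gradient Φ (q 0), q 0 - θs⟫ := by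
        rw [← inner_neg_right, neg_sub]
      have h7 : ⟪gradient Φ (q 0), q 0 - θs⟫ ≤ ‖gradient Φ (q 0)‖ * ‖q 0 - θs‖ :=
        real_inner_le_norm _ _
      have h8 := hgb (q 0)
      nlinarith [norm_nonneg (q 0 - θs), norm_nonneg (gradient Φ (q 0))]
    rcases le_or_gt (m/4) t with hcase | hcase
    · -- main case : t ≥ m/4
      have hF := Fbound hC1 hconv hm θs hmin hLip hL q p θ hq hp hθ ht
      have hI := Ibound hC1 hm hm1 θs hmin hL hΦ0 hq hp
        (fun s hs => by have h := hpb s hs.1; rwa [hA, hB] at h) ht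
      rw [← hA, ← hB] at hI
      have hInn : 0 ≤ ∫ s in (0:ℝ)..t, ‖p s‖ := by
        apply intervalIntegral.integral_nonneg ht
        intro u _; exact norm_nonneg _
      -- bound the sqrt term
      have hLm0 : 0 ≤ L * m := mul_nonneg hL hm.le
      have hsqLm : Real.sqrt (L*m) ≤ 2*L + m/8 := by
        rw [show (2*L + m/8 : ℝ) = Real.sqrt ((2*L + m/8)^2) by
          rw [Real.sqrt_sq (by positivity)]]
        apply Real.sqrt_le_sqrt
        nlinarith [sq_nonneg (2*L - m/8)]
      have hsq1 : Real.sqrt (L * (Φ (q 0) - Φ θs + (m/2) * ⟪p 0, p 0⟫))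
          ≤ L*A + Real.sqrt (L*m)*B := by
        have hpp0 : ⟪p 0, p 0⟫ = B^2 := by rw [hB]; exact real_inner_self_eq_norm_sq _
        have hsq2 : (Real.sqrt (L*m))^2 = L*m := Real.sq_sqrt hLm0
        have harg : L * (Φ (q 0) - Φ θs + (m/2) * ⟪p 0, p 0⟫)
            ≤ (L*A + Real.sqrt (L*m)*B)^2 := by
          rw [hpp0]
          rw [← hA] at hΦ0
          nlinarith [mul_le_mul_of_nonneg_left hΦ0 hL, sq_nonneg (L*A),
            mul_nonneg (mul_nonneg (mul_nonneg hL hA0) (Real.sqrt_nonneg (L*m))) hB0,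
            Real.sq_sqrt hLm0, mul_nonneg hL (sq_nonneg B)]
        calc Real.sqrt (L * (Φ (q 0) - Φ θs + (m/2) * ⟪p 0, p 0⟫))
            ≤ Real.sqrt ((L*A + Real.sqrt (L*m)*B)^2) := Real.sqrt_le_sqrt harg
          _ = L*A + Real.sqrt (L*m)*B := by
              apply Real.sqrt_sq
              positivity
      -- exponential factor
      have hEt0 : 0 ≤ Real.exp (-(t/m)) := (Real.exp_pos _).le
      have hEtle : Real.exp (-(t/m)) ≤ 4/5 := by
        have h1 : (1:ℝ)/4 ≤ t/m := by
          rw [le_div_iff₀ hm]; linarith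
        have h2 : Real.exp (-(t/m)) ≤ Real.exp (-(1/4)) := by
          apply Real.exp_le_exp.2; linarith
        have h3 : Real.exp (-(1/4)) ≤ 4/5 := by
          rw [Real.exp_neg]
          have h4 : (5:ℝ)/4 ≤ Real.exp (1/4) := by
            have := Real.add_one_le_exp (1/4 : ℝ)
            linarith
          have h5 : (0:ℝ) < 5/4 := by norm_num
          calc (Real.exp (1/4))⁻¹ ≤ ((5:ℝ)/4)⁻¹ := by
                apply inv_anti₀ h5 h4
            _ = 4/5 := by norm_num
        linarith
      -- triangle inequality
      have htri : ‖q t - θ t‖ ≤ ‖q t - θ t + m • p t‖ + m * ‖p t‖ := by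
        have h1 : ‖(q t - θ t + m • p t) - m • p t‖
            ≤ ‖q t - θ t + m • p t‖ + ‖m • p t‖ := norm_sub_le _ _
        have h2 : (q t - θ t + m • p t) - m • p t = q t - θ t := by abel
        rw [h2, norm_smul, Real.norm_eq_abs, abs_of_pos hm] at h1
        exact h1
      have hF0 : ‖q 0 - θ 0 + m • p 0‖ ≤ D + m * B := by
        rw [hD, hB]
        calc ‖q 0 - θ 0 + m • p 0‖ ≤ ‖q 0 - θ 0‖ + ‖m • p 0‖ := norm_add_le _ _
          _ = ‖q 0 - θ 0‖ + m * ‖p 0‖ := by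
              rw [norm_smul, Real.norm_eq_abs, abs_of_pos hm]
      have hpt := hpb t ht
      -- monotone substitution steps
      have e1 : (3/2) * m * Real.sqrt (L * (Φ (q 0) - Φ θs + (m/2) * ⟪p 0, p 0⟫))
          ≤ (3/2) * m * (L*A + (2*L + m/8)*B) := by
        apply mul_le_mul_of_nonneg_left _ (by positivity : (0:ℝ) ≤ (3/2) * m)
        have h1 : Real.sqrt (L*m)*B ≤ (2*L + m/8)*B :=
          mul_le_mul_of_nonneg_right hsqLm hB0
        linarith [hsq1]
      have e3 : (3/2) * (m * L * ∫ s in (0:ℝ)..t, ‖p s‖)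
          ≤ (3/2) * (m*L*((A+B)*(2*L+1+2*t)/4)) := by
        have h1 : m * L * ∫ s in (0:ℝ)..t, ‖p s‖ ≤ m*L*((A+B)*(2*L+1+2*t)/4) :=
          mul_le_mul_of_nonneg_left hI (by positivity)
        linarith
      have e4 : m * ‖p t‖ ≤ m*((4/5)*B + L*((2*L+2)*A + 3*B)) := by
        apply mul_le_mul_of_nonneg_left _ hm.le
        have h3 : Real.exp (-(t/m))*B ≤ (4/5)*B := mul_le_mul_of_nonneg_right hEtle hB0
        linarith [hpt]
      have harith := arith_main (t := t) hL hm hm1 ht hA0 hB0 hD0 hT0 hAD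
      linarith [htri, hF, hF0, e1, e3, e4, harith]
    · -- small time case : t < m/4
      have hd : ∀ s ∈ Icc (0:ℝ) t,
          HasDerivWithinAt (fun u => q u - θ u) (p s + gradient Φ (θ s)) (Icc (0:ℝ) t) s := by
        intro s _
        have h1 := (hq s).sub (hθ s)
        rw [sub_neg_eq_add] at h1
        exact h1.hasDerivWithinAt
      have hbd : ∀ s ∈ Ico (0:ℝ) t, ‖p s + gradient Φ (θ s)‖
          ≤ (B + L*((2*L+2)*A + 3*B)) + L*T := by
        intro s hs
        have h1 : ‖p s‖ ≤ B + L*((2*L+2)*A + 3*B) := by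
          have h2 := hpb s hs.1
          have h3 : Real.exp (-(s/m)) ≤ 1 := by
            rw [show (1:ℝ) = Real.exp 0 by rw [Real.exp_zero]]
            apply Real.exp_le_exp.2
            have : 0 ≤ s/m := div_nonneg hs.1 hm.le
            linarith
          have h4 : Real.exp (-(s/m)) * B ≤ 1 * B :=
            mul_le_mul_of_nonneg_right h3 hB0
          linarith
        have h5 : ‖gradient Φ (θ s)‖ ≤ L*T := by
          calc ‖gradient Φ (θ s)‖ ≤ L * ‖θ s - θs‖ := hgb _
            _ ≤ L*T := mul_le_mul_of_nonneg_left (hθb s hs.1) hL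
        calc ‖p s + gradient Φ (θ s)‖ ≤ ‖p s‖ + ‖gradient Φ (θ s)‖ := norm_add_le _ _
          _ ≤ (B + L*((2*L+2)*A + 3*B)) + L*T := add_le_add h1 h5
      have hseg := norm_image_sub_le_of_norm_deriv_le_segment' hd hbd t
        (right_mem_Icc.2 ht)
      have htri2 : ‖q t - θ t‖ ≤ D
          + t * ((B + L*((2*L+2)*A + 3*B)) + L*T) := by
        have h6 := norm_sub_norm_le (q t - θ t) (q 0 - θ 0)
        rw [← hD] at *
        have h7 : ((B + L*((2*L+2)*A + 3*B)) + L*T) * (t - 0)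
            = t * ((B + L*((2*L+2)*A + 3*B)) + L*T) := by ring
        rw [h7] at hseg
        linarith [hseg, h6]
      have hsmall := arith_small (t := t) hL hm hm1 ht (le_of_lt hcase)
        hA0 hB0 hD0 hT0 hAD
      linarith [htri2, hsmall]
end

section
/- Let m: [0,∞) → (0,∞) be strictly decreasing differentiable with |m′(t)| ≤ (κ/4)m(t), κ > 0, m(0) = m₀ ≤ 1, and set E(t) = ∫₀ᵗ 1/m(s) ds. Then ∫₀ᵗ e^{−2E(s)} e^{κs} ds ≤ (1 + κ) m₀ e^{κt} for all t ≥ 0. -/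
/-!
Since `m` decreases, `E s ≥ s / m 0`, so on `[0, t]` the integrand is at most
`exp (κ t) * exp (-2 s / m 0)`, and the integral is therefore at most `m 0 / 2 * exp (κ t)`.
-/

open Real intervalIntegral MeasureTheory Set

theorem integral_exp_neg_mul_le_inv {c : ℝ} (hc : 0 < c) (t : ℝ) :
    ∫ s in (0 : ℝ)..t, exp (-(c * s)) ≤ c⁻¹ := by
  rw [integral_comp_mul_left (fun x => exp (-x)) hc.ne', integral_comp_neg, integral_exp,
    smul_eq_mul]
  simp only [mul_zero, neg_zero, exp_zero]
  exact mul_le_of_le_one_right (inv_nonneg.2 hc.le) (by linarith [exp_pos (-(c * t))])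

theorem integral_exp_neg_two_mul_mul_exp_le {E : ℝ → ℝ} {c κ t : ℝ} (hc : 0 < c) (hκ : 0 ≤ κ)
    (ht : 0 ≤ t) (hE_mono : MonotoneOn E (Ici 0)) (hE_ge : ∀ s ≥ 0, s / c ≤ E s) :
    ∫ s in (0 : ℝ)..t, exp (-(2 * E s)) * exp (κ * s) ≤ c / 2 * exp (κ * t) := by
  have hint : IntervalIntegrable (fun s => exp (-(2 * E s)) * exp (κ * s)) volume 0 t := by
    refine AntitoneOn.intervalIntegrable (fun a ha b hb hab => ?_) |>.mul_continuousOn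
      (by fun_prop)
    rw [uIcc_of_le ht] at ha hb
    exact exp_le_exp.2 (by linarith [hE_mono ha.1 hb.1 hab])
  calc ∫ s in (0 : ℝ)..t, exp (-(2 * E s)) * exp (κ * s)
      ≤ ∫ s in (0 : ℝ)..t, exp (-(2 / c * s)) * exp (κ * t) := by
        refine integral_mono_on ht hint (Continuous.intervalIntegrable (by fun_prop) _ _)
          fun s hs => ?_
        refine mul_le_mul (exp_le_exp.2 ?_) (exp_le_exp.2 ?_) (exp_pos _).le (exp_pos _).le
        · rw [show 2 / c * s = 2 * (s / c) by ring]
          linarith [hE_ge s hs.1]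
        · exact mul_le_mul_of_nonneg_left hs.2 hκ
    _ = (∫ s in (0 : ℝ)..t, exp (-(2 / c * s))) * exp (κ * t) := integral_mul_const _ _
    _ ≤ (2 / c)⁻¹ * exp (κ * t) := by
        gcongr
        exact integral_exp_neg_mul_le_inv (by positivity) t
    _ = c / 2 * exp (κ * t) := by rw [inv_div]

section AntitonePositive

variable {m : ℝ → ℝ}

theorem monotoneOn_inv_of_antitoneOn (hpos : ∀ t ≥ (0 : ℝ), 0 < m t)
    (hanti : AntitoneOn m (Ici 0)) : MonotoneOn (fun u => (m u)⁻¹) (Ici 0) :=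
  fun _ hu _ hv huv => inv_anti₀ (hpos _ hv) (hanti hu hv huv)

theorem intervalIntegrable_inv_of_antitoneOn (hpos : ∀ t ≥ (0 : ℝ), 0 < m t)
    (hanti : AntitoneOn m (Ici 0)) {a b : ℝ} (ha : 0 ≤ a) (hb : 0 ≤ b) :
    IntervalIntegrable (fun u => (m u)⁻¹) volume a b :=
  ((monotoneOn_inv_of_antitoneOn hpos hanti).mono fun _ hu =>
    le_trans (le_min ha hb) hu.1).intervalIntegrable

theorem div_le_integral_inv_of_antitoneOn (hpos : ∀ t ≥ (0 : ℝ), 0 < m t)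
    (hanti : AntitoneOn m (Ici 0)) {s : ℝ} (hs : 0 ≤ s) :
    s / m 0 ≤ ∫ u in (0 : ℝ)..s, (m u)⁻¹ := by
  have h := integral_mono_on hs intervalIntegrable_const
    (intervalIntegrable_inv_of_antitoneOn hpos hanti le_rfl hs)
    fun u hu => monotoneOn_inv_of_antitoneOn hpos hanti self_mem_Ici hu.1 hu.1
  simpa [div_eq_mul_inv, mul_comm] using h

theorem monotoneOn_integral_inv_of_antitoneOn (hpos : ∀ t ≥ (0 : ℝ), 0 < m t)
    (hanti : AntitoneOn m (Ici 0)) :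
    MonotoneOn (fun s => ∫ u in (0 : ℝ)..s, (m u)⁻¹) (Ici 0) := by
  intro a (ha : 0 ≤ a) b (hb : 0 ≤ b) hab
  dsimp only
  rw [← integral_add_adjacent_intervals (intervalIntegrable_inv_of_antitoneOn hpos hanti le_rfl ha)
    (intervalIntegrable_inv_of_antitoneOn hpos hanti ha hb)]
  exact le_add_of_nonneg_right (integral_nonneg hab fun u hu =>
    (inv_pos.2 (hpos u (ha.trans hu.1))).le)

end AntitonePositive

theorem stmt16_general (m : ℝ → ℝ) (κ : ℝ) (hκ : 0 < κ)
    (hpos : ∀ t ≥ (0 : ℝ), 0 < m t)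
    (hanti : StrictAntiOn m (Set.Ici 0))
    (E : ℝ → ℝ) (hE : ∀ t, E t = ∫ s in (0 : ℝ)..t, (m s)⁻¹) :
    ∀ t ≥ (0 : ℝ), ∫ s in (0 : ℝ)..t, Real.exp (-(2 * E s)) * Real.exp (κ * s)
      ≤ (1 + κ) * m 0 * Real.exp (κ * t) := by
  intro t ht
  have hm0 : 0 < m 0 := hpos 0 le_rfl
  have hE_mono : MonotoneOn E (Ici 0) :=
    funext hE ▸ monotoneOn_integral_inv_of_antitoneOn hpos hanti.antitoneOn
  have hE_ge : ∀ s ≥ 0, s / m 0 ≤ E s := fun s hs =>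
    hE s ▸ div_le_integral_inv_of_antitoneOn hpos hanti.antitoneOn hs
  calc _ ≤ m 0 / 2 * exp (κ * t) :=
        integral_exp_neg_two_mul_mul_exp_le hm0 hκ.le ht hE_mono hE_ge
    _ ≤ (1 + κ) * m 0 * exp (κ * t) := by gcongr; nlinarith

/-- Second integral estimate for a slowly decaying mass, with `E(t) = ∫₀ᵗ 1/m(s) ds`. -/
theorem stmt16 (m m' : ℝ → ℝ) (κ : ℝ) (hκ : 0 < κ)
    (hpos : ∀ t ≥ (0 : ℝ), 0 < m t)
    (hanti : StrictAntiOn m (Set.Ici 0))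
    (hderiv : ∀ t ≥ (0 : ℝ), HasDerivAt m (m' t) t)
    (hbound : ∀ t > (0 : ℝ), |m' t| ≤ κ / 4 * m t)
    (hm0 : m 0 ≤ 1)
    (E : ℝ → ℝ) (hE : ∀ t, E t = ∫ s in (0 : ℝ)..t, (m s)⁻¹) :
    ∀ t ≥ (0 : ℝ), ∫ s in (0 : ℝ)..t, Real.exp (-(2 * E s)) * Real.exp (κ * s)
      ≤ (1 + κ) * m 0 * Real.exp (κ * t) :=
  stmt16_general m κ hκ hpos hanti E hE
end
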